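/- Let F be a Borel probability measure on [0,1] and for 2 ≤ k ≤ n define λ_{nk} = ∫_{[0,1]} y^{k−2}(1−y)^{n−k} F(dy). For integers 2 ≤ k ≤ n: C(n,k) λ_{nk} = (n/2) E[ P_{k−1}(n,W) − P_k(n,W) ], where P_j(n,w) = C(n−1,j) (1−w)^{n−j−1} w^{j−1} for 1 ≤ j ≤ n−1, P_n(n,w) = 0, and the convention w^0 = 1 is used at w = 0. -/

import Mathlib

open MeasureTheory Set

/-- Λ-coalescent merger rate `λ_{nk} = ∫ y^{k-2} (1-y)^{n-k} F(dy)`. -/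
noncomputable def lamRate (F : Measure ℝ) (n k : ℕ) : ℝ :=
  ∫ y, y ^ (k - 2) * (1 - y) ^ (n - k) ∂F

/-- `P_j(n,w) = C(n-1,j) (1-w)^{n-j-1} w^{j-1}` for `j ≤ n-1`, and `P_n(n,w) = 0`. -/
noncomputable def Ppoly (n j : ℕ) (w : ℝ) : ℝ :=
  if j = n then 0 else ((n - 1).choose j : ℝ) * (1 - w) ^ (n - j - 1) * w ^ (j - 1)

/-!
For fixed `y`, the integrand `(P_{k-1}(n,uy) - P_k(n,uy)) · 2u` is `2 C(n-1,k-1) / k` times the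
`u`-derivative of `u^k y^{k-2} (1 - uy)^{n-k}`, so the inner integral is
`2 C(n-1,k-1) / k · y^{k-2} (1-y)^{n-k}`. Integrating against `F` and using
`k C(n,k) = n C(n-1,k-1)` gives the identity.
-/

lemma mul_ppoly_sub_ppoly {n k : ℕ} (hk : 2 ≤ k) (hkn : k ≤ n) (w : ℝ) :
    k * (Ppoly n (k - 1) w - Ppoly n k w)
      = (n - 1).choose (k - 1) * (k * w ^ (k - 2) * (1 - w) ^ (n - k)
          - (n - k : ℕ) * w ^ (k - 1) * (1 - w) ^ (n - k - 1)) := by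
  obtain ⟨j, rfl⟩ : ∃ j, k = j + 2 := ⟨k - 2, by omega⟩
  rcases hkn.eq_or_lt with rfl | hlt
  · simp [Ppoly]
  · obtain ⟨m, rfl⟩ : ∃ m, n = j + m + 3 := ⟨n - j - 3, by omega⟩
    have hchoose :
        ((j + m + 2).choose (j + 2) : ℝ) * (j + 2) = (j + m + 2).choose (j + 1) * (m + 1) := by
      have := Nat.choose_succ_right_eq (j + m + 2) (j + 1)
      rw [show j + m + 2 - (j + 1) = m + 1 by omega] at this
      exact_mod_cast this
    simp only [Ppoly, show j + 2 - 1 = j + 1 by omega, if_neg (by omega : j + 1 ≠ j + m + 3),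
      if_neg (by omega : j + 2 ≠ j + m + 3),
      show j + 2 - 2 = j by omega, show j + 1 - 1 = j by omega,
      show j + m + 3 - 1 = j + m + 2 by omega, show j + m + 3 - (j + 1) - 1 = m + 1 by omega,
      show j + m + 3 - (j + 2) = m + 1 by omega]
    push_cast
    linear_combination -(1 - w) ^ m * w ^ (j + 1) * hchoose

lemma hasDerivAt_pow_mul_one_sub_mul_pow {k : ℕ} (hk : 2 ≤ k) (m : ℕ) (y u : ℝ) :
    HasDerivAt (fun u => u ^ k * y ^ (k - 2) * (1 - u * y) ^ m)
      (u * (k * (u * y) ^ (k - 2) * (1 - u * y) ^ m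
        - m * (u * y) ^ (k - 1) * (1 - u * y) ^ (m - 1))) u := by
  obtain ⟨j, rfl⟩ : ∃ j, k = j + 2 := ⟨k - 2, by omega⟩
  have hlin : HasDerivAt (fun u : ℝ => 1 - u * y) (-y) u := by
    simpa using ((hasDerivAt_id u).mul_const y).const_sub 1
  simp only [Nat.add_sub_cancel, show j + 2 - 1 = j + 1 by omega]
  refine (((hasDerivAt_pow (j + 2) u).mul_const (y ^ j)).mul (hlin.pow m)).congr_deriv ?_
  push_cast [Pi.pow_apply]
  ring

lemma setIntegral_ppoly_sub_ppoly {n k : ℕ} (hk : 2 ≤ k) (hkn : k ≤ n) (y : ℝ) :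
    ∫ u in Ioo (0 : ℝ) 1, (Ppoly n (k - 1) (u * y) - Ppoly n k (u * y)) * (2 * u)
      = 2 * (n - 1).choose (k - 1) / k * (y ^ (k - 2) * (1 - y) ^ (n - k)) := by
  have hk0 : (k : ℝ) ≠ 0 := by positivity
  set c : ℝ := 2 * (n - 1).choose (k - 1) / k
  set f : ℝ → ℝ := fun u => u * (k * (u * y) ^ (k - 2) * (1 - u * y) ^ (n - k)
        - (n - k : ℕ) * (u * y) ^ (k - 1) * (1 - u * y) ^ (n - k - 1))
  have hintegrand :
      ∀ u : ℝ, (Ppoly n (k - 1) (u * y) - Ppoly n k (u * y)) * (2 * u) = c * f u := by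
    intro u
    have := mul_ppoly_sub_ppoly hk hkn (u * y)
    simp only [c, f]
    field_simp
    linear_combination u * this
  simp_rw [hintegrand]
  rw [← integral_Ioc_eq_integral_Ioo, ← intervalIntegral.integral_of_le zero_le_one,
    intervalIntegral.integral_const_mul,
    intervalIntegral.integral_eq_sub_of_hasDerivAt
      (fun u _ => hasDerivAt_pow_mul_one_sub_mul_pow hk (n - k) y u)
      ((by fun_prop : Continuous f).intervalIntegrable 0 1)]
  simp [zero_pow (by omega : k ≠ 0)]

theorem stmt5 (F : Measure ℝ) (n k : ℕ) (hk : 2 ≤ k) (hkn : k ≤ n) :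
    (n.choose k : ℝ) * lamRate F n k
      = ((n : ℝ) / 2) *
        ∫ y, (∫ u in Set.Ioo (0:ℝ) 1,
          (Ppoly n (k - 1) (u * y) - Ppoly n k (u * y)) * (2 * u)) ∂F := by
  have hchoose : (n.choose k : ℝ) * k = n * (n - 1).choose (k - 1) := by
    obtain ⟨j, rfl⟩ : ∃ j, k = j + 1 := ⟨k - 1, by omega⟩
    obtain ⟨m, rfl⟩ : ∃ m, n = m + 1 := ⟨n - 1, by omega⟩
    exact_mod_cast (Nat.add_one_mul_choose_eq m j).symm
  have hk0 : (k : ℝ) ≠ 0 := by positivity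
  simp_rw [setIntegral_ppoly_sub_ppoly hk hkn]
  rw [integral_const_mul, ← lamRate]
  field_simp
  linear_combination lamRate F n k * hchoose
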